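/- The lattice L_{H8} = {x ∈ Z^8 : x mod 2 ∈ H8} obtained as the preimage of the [8,4,4] Hamming code H8 under reduction modulo 2 is isometric to √2·E8, i.e., L_{H8} equipped with the standard form is an even lattice isometric to the E8 lattice with its bilinear form doubled. -/

import Mathlib

/-!
Pair up the coordinates as `(x₀,x₁), …, (x₆,x₇)` and apply `(a, b) ↦ (a + b, a - b)` to each
pair. This map `H` satisfies `H ∘ H = 2` and doubles the standard form. Reading the parity checks
of `H8` through `H`, a vector `x ∈ ℤ⁸` lies in `L_{H8}` exactly when all coordinates of `H x` have
the same parity and their sum is divisible by `4`, i.e. when `H x ∈ 2·E8`. Hence `x ↦ H x / 2`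
maps `L_{H8}` bijectively onto `E8`, halving the form.
-/

noncomputable section

/-- The [8,4,4] Hamming code `H8`. -/
def H8 : Submodule (ZMod 2) (Fin 8 → ZMod 2) :=
  Submodule.span (ZMod 2)
    {![1,1,1,1,1,1,1,1], ![1,1,1,1,0,0,0,0], ![1,1,0,0,1,1,0,0], ![1,0,1,0,1,0,1,0]}

/-- The lattice `L_{H8} ⊆ ℤ⁸`: the preimage of `H8` under reduction mod 2. -/
def LH8 : Set (Fin 8 → ℤ) :=
  {x | (fun i => (x i : ZMod 2)) ∈ H8}

/-- The E8 root lattice, realized in `ℚ⁸`. -/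
def E8Set : Set (Fin 8 → ℚ) :=
  {x | ((∀ i, ∃ n : ℤ, x i = n) ∨ (∀ i, ∃ n : ℤ, x i = n + 1/2)) ∧
    ∃ m : ℤ, ∑ i, x i = 2 * m}

open Finset

set_option maxRecDepth 10000 in
theorem mem_H8_iff (c : Fin 8 → ZMod 2) :
    c ∈ H8 ↔ c 0 + c 1 + c 2 + c 3 = 0 ∧ c 2 + c 3 + c 4 + c 5 = 0 ∧
      c 4 + c 5 + c 6 + c 7 = 0 ∧ c 0 + c 2 + c 4 + c 6 = 0 := by
  have hgens : ({![1,1,1,1,1,1,1,1], ![1,1,1,1,0,0,0,0], ![1,1,0,0,1,1,0,0],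
      ![1,0,1,0,1,0,1,0]} : Set (Fin 8 → ZMod 2)) =
      Set.range ![![1,1,1,1,1,1,1,1], ![1,1,1,1,0,0,0,0], ![1,1,0,0,1,1,0,0],
        ![1,0,1,0,1,0,1,0]] := by
    simp only [Matrix.range_cons, Matrix.range_empty, Set.union_empty, Set.singleton_union]
  rw [H8, hgens, Submodule.mem_span_range_iff_exists_fun]
  revert c
  decide

theorem mem_LH8_iff (x : Fin 8 → ℤ) :
    x ∈ LH8 ↔ 2 ∣ x 0 + x 1 + x 2 + x 3 ∧ 2 ∣ x 2 + x 3 + x 4 + x 5 ∧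
      2 ∣ x 4 + x 5 + x 6 + x 7 ∧ 2 ∣ x 0 + x 2 + x 4 + x 6 := by
  have two_dvd_iff (a : ℤ) : 2 ∣ a ↔ (a : ZMod 2) = 0 :=
    (ZMod.intCast_zmod_eq_zero_iff_dvd a 2).symm
  simp only [LH8, Set.mem_ofPred_eq, mem_H8_iff, two_dvd_iff, Int.cast_add]

theorem Int.two_dvd_sum_mul_self_iff {ι : Type*} (s : Finset ι) (x : ι → ℤ) :
    2 ∣ ∑ i ∈ s, x i * x i ↔ 2 ∣ ∑ i ∈ s, x i := by
  refine dvd_iff_dvd_of_dvd_sub ?_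
  rw [← sum_sub_distrib]
  exact dvd_sum fun i _ => by simpa [mul_sub] using (Int.even_mul_pred_self (x i)).two_dvd

theorem two_dvd_sum_mul_self_of_mem_LH8 {x : Fin 8 → ℤ} (hx : x ∈ LH8) :
    2 ∣ ∑ i, x i * x i := by
  obtain ⟨h₁, -, h₃, -⟩ := (mem_LH8_iff x).1 hx
  rw [Int.two_dvd_sum_mul_self_iff, Fin.sum_univ_eight]
  omega

section PairHadamard

variable (R : Type*) [CommRing R]

def pairHadamard : (Fin 8 → R) →ₗ[R] (Fin 8 → R) where
  toFun v := ![v 0 + v 1, v 0 - v 1, v 2 + v 3, v 2 - v 3, v 4 + v 5, v 4 - v 5, v 6 + v 7, v 6 - v 7]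
  map_add' v w := by ext i; fin_cases i <;> simp <;> ring
  map_smul' r v := by ext i; fin_cases i <;> simp <;> ring

variable {R}

theorem pairHadamard_pairHadamard (v : Fin 8 → R) :
    pairHadamard R (pairHadamard R v) = 2 • v := by
  ext i; fin_cases i <;> simp [pairHadamard] <;> ring

theorem pairHadamard_injective [IsAddTorsionFree R] : Function.Injective (pairHadamard R) :=
  fun v w h => IsAddTorsionFree.nsmul_right_injective two_ne_zero <| by
    simpa only [pairHadamard_pairHadamard] using congrArg (pairHadamard R) h

theorem sum_pairHadamard_mul_pairHadamard (v w : Fin 8 → R) :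
    ∑ i, pairHadamard R v i * pairHadamard R w i = 2 * ∑ i, v i * w i := by
  simp [Fin.sum_univ_eight, pairHadamard]; ring

theorem sum_pairHadamard (v : Fin 8 → R) :
    ∑ i, pairHadamard R v i = 2 * (v 0 + v 2 + v 4 + v 6) := by
  simp [Fin.sum_univ_eight, pairHadamard]; ring

end PairHadamard

theorem Int.even_or_odd_of_forall_modEq_two {ι : Type*} {z : ι → ℤ}
    (hz : ∀ i j, z i ≡ z j [ZMOD 2]) : (∀ i, Even (z i)) ∨ ∀ i, Odd (z i) := by
  by_cases hev : ∀ i, Even (z i)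
  · exact .inl hev
  · obtain ⟨j, hj⟩ := not_forall.1 hev
    refine .inr fun i => ?_
    have := hz i j
    rw [Int.not_even_iff_odd, Int.odd_iff] at hj
    rw [Int.odd_iff]
    exact Eq.trans this hj

def twoE8 : Set (Fin 8 → ℤ) :=
  {z | (∀ i j, z i ≡ z j [ZMOD 2]) ∧ 4 ∣ ∑ i, z i}

section Halve

variable {ι : Type*}

def halve (z : ι → ℤ) : ι → ℚ := fun i => (z i : ℚ) / 2

theorem halve_injective : Function.Injective (halve (ι := ι)) :=
  fun z w h => funext fun i => by simpa [halve] using congrFun h i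

theorem halve_add (z w : ι → ℤ) : halve (z + w) = halve z + halve w := by
  ext i; simp [halve, add_div]

theorem sum_halve_mul_halve [Fintype ι] (z w : ι → ℤ) :
    ∑ i, halve z i * halve w i = ((∑ i, z i * w i : ℤ) : ℚ) / 4 := by
  simp only [halve, Int.cast_sum, Int.cast_mul, sum_div]
  exact sum_congr rfl fun i _ => by ring

theorem sum_halve [Fintype ι] (z : ι → ℤ) :
    ∑ i, halve z i = ((∑ i, z i : ℤ) : ℚ) / 2 := by
  simp only [halve, Int.cast_sum, sum_div]

end Halve

theorem E8Set_eq_image_halve_twoE8 : E8Set = halve '' twoE8 := by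
  ext y
  constructor
  · rintro ⟨hint | hhalf, m, hm⟩
    · choose n hn using hint
      have hsum : ∑ i, n i = 2 * m := by
        rw [sum_congr rfl fun i _ => hn i] at hm
        exact_mod_cast hm
      refine ⟨fun i => 2 * n i, ⟨fun i j => ?_, ?_⟩, funext fun i => by simp [halve, hn]⟩
      · simp [Int.ModEq]
      · exact ⟨m, by rw [← mul_sum, hsum]; ring⟩
    · choose n hn using hhalf
      have hsum : ∑ i, n i + 4 = 2 * m := by
        rw [sum_congr rfl fun i _ => hn i, sum_add_distrib] at hm
        norm_num at hm
        exact_mod_cast hm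
      refine ⟨fun i => 2 * n i + 1, ⟨fun i j => ?_, ?_⟩, funext fun i => by simp [halve, hn]; ring⟩
      · simp [Int.ModEq]
      · exact ⟨m, by rw [sum_add_distrib, ← mul_sum]; simp; linarith⟩
  · rintro ⟨z, ⟨hpar, k, hk⟩, rfl⟩
    refine ⟨?_, k, by rw [sum_halve, hk]; push_cast; ring⟩
    rcases Int.even_or_odd_of_forall_modEq_two hpar with hev | hodd
    · refine .inl fun i => ?_
      obtain ⟨n, hn⟩ := hev i
      exact ⟨n, by simp [halve, hn]⟩
    · refine .inr fun i => ?_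
      obtain ⟨n, hn⟩ := hodd i
      exact ⟨n, by simp [halve, hn]; ring⟩

theorem mem_LH8_iff_pairHadamard_mem_twoE8 (x : Fin 8 → ℤ) :
    x ∈ LH8 ↔ pairHadamard ℤ x ∈ twoE8 := by
  rw [mem_LH8_iff, twoE8, Set.mem_ofPred_eq, sum_pairHadamard]
  constructor
  · rintro ⟨h₁, h₂, h₃, h₄⟩
    have hpar : ∀ i, pairHadamard ℤ x i ≡ x 0 + x 1 [ZMOD 2] := by
      intro i; fin_cases i <;> simp [pairHadamard, Int.ModEq] <;> omega
    exact ⟨fun i j => (hpar i).trans (hpar j).symm, by omega⟩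
  · rintro ⟨hpar, h⟩
    have h₀₂ := hpar 0 2
    have h₂₄ := hpar 2 4
    have h₄₆ := hpar 4 6
    simp [pairHadamard, Int.ModEq] at h₀₂ h₂₄ h₄₆
    omega

theorem exists_pairHadamard_eq {z : Fin 8 → ℤ} (hz : ∀ i j, z i ≡ z j [ZMOD 2]) :
    ∃ x, pairHadamard ℤ x = z := by
  have heven : ∀ i, 2 ∣ pairHadamard ℤ z i := by
    have := (hz 0 1).dvd; have := (hz 2 3).dvd; have := (hz 4 5).dvd; have := (hz 6 7).dvd
    intro i
    fin_cases i <;> simp [pairHadamard] <;> omega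
  set x : Fin 8 → ℤ := fun i => pairHadamard ℤ z i / 2
  have hx : 2 • x = pairHadamard ℤ z := funext fun i => by
    simp [x, Int.mul_ediv_cancel' (heven i)]
  refine ⟨x, IsAddTorsionFree.nsmul_right_injective two_ne_zero ?_⟩
  simp only [← map_nsmul, hx, pairHadamard_pairHadamard]

/-- `L_{H8}` is an even lattice isometric to `√2·E8`: there is an additive bijection
of `L_{H8}` onto the E8 lattice halving the bilinear form. -/
theorem LH8_is_sqrt2_E8 :
    (∀ x ∈ LH8, (2 : ℤ) ∣ ∑ i, x i * x i) ∧
    ∃ f : (Fin 8 → ℤ) → (Fin 8 → ℚ),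
      Set.BijOn f LH8 E8Set ∧
      (∀ x ∈ LH8, ∀ y ∈ LH8, f (x + y) = f x + f y) ∧
      (∀ x ∈ LH8, ∀ y ∈ LH8,
        ∑ i, f x i * f y i = ((∑ i, x i * y i : ℤ) : ℚ) / 2) := by
  refine ⟨fun x hx => two_dvd_sum_mul_self_of_mem_LH8 hx,
    fun x => halve (pairHadamard ℤ x), ⟨?mapsTo, ?injOn, ?surjOn⟩, ?add, ?form⟩
  case mapsTo =>
    intro x hx
    rw [E8Set_eq_image_halve_twoE8]
    exact ⟨_, (mem_LH8_iff_pairHadamard_mem_twoE8 x).1 hx, rfl⟩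
  case injOn =>
    exact fun x _ y _ h => pairHadamard_injective (halve_injective h)
  case surjOn =>
    rw [E8Set_eq_image_halve_twoE8]
    rintro _ ⟨z, hz, rfl⟩
    obtain ⟨x, rfl⟩ := exists_pairHadamard_eq hz.1
    exact ⟨x, (mem_LH8_iff_pairHadamard_mem_twoE8 x).2 hz, rfl⟩
  case add =>
    intro x _ y _
    simp only [map_add, halve_add]
  case form =>
    intro x _ y _
    rw [sum_halve_mul_halve, sum_pairHadamard_mul_pairHadamard]
    push_cast
    ring
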